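/- arXiv:math/0701126 — 3 statements merged into one kernel-verified Lean document; each statement's English description precedes it below -/
import Mathlib

section
/- Let m ∈ {2,3}, let Ω ⊂ ℝ^m be a bounded domain, let G be a fixed harmonic function on ℝ^m \ {0} such that ∫_V |∇G(y)|² dy = ∞ for every finite cone V with vertex at 0. Let x ∈ Ω, let σ be a needle with tip at x, and let {v_n} be a needle sequence for (x,σ). Then for every finite cone V with vertex at x one has lim_{n→∞} ∫_{V ∩ Ω} |∇v_n(y)|² dy = ∞. -/
open MeasureTheory

/-- A real-valued function is harmonic on a set: it is `C²` there and the sum of its pure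
second derivatives (in the standard coordinate directions) vanishes there. -/
def HarmOn (m : ℕ) (f : EuclideanSpace ℝ (Fin m) → ℝ)
    (s : Set (EuclideanSpace ℝ (Fin m))) : Prop :=
  ContDiffOn ℝ 2 f s ∧ ∀ y ∈ s,
    ∑ i, fderiv ℝ (fun z => fderiv ℝ f z (EuclideanSpace.single i 1)) y
      (EuclideanSpace.single i 1) = 0

/-- `V` is a finite cone with vertex at `x`: `V = B_ρ(x) ∩ C_x(b, θ/2)` for some `ρ > 0`,
nonzero `b` and `θ ∈ (0,π)`, where
`C_x(b,θ/2) = {y : (y−x)·b > |y−x| |b| cos(θ/2)}`. -/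
def IsFiniteCone (m : ℕ) (x : EuclideanSpace ℝ (Fin m))
    (V : Set (EuclideanSpace ℝ (Fin m))) : Prop :=
  ∃ (ρ : ℝ) (b : EuclideanSpace ℝ (Fin m)) (θ : ℝ), 0 < ρ ∧ b ≠ 0 ∧ 0 < θ ∧ θ < Real.pi ∧
    V = Metric.ball x ρ ∩
      {y | (inner ℝ (y - x) b : ℝ) > ‖y - x‖ * ‖b‖ * Real.cos (θ / 2)}

section Aux

open Real

variable {E : Type*} [NormedAddCommGroup E] [InnerProductSpace ℝ E] [CompleteSpace E]

omit [CompleteSpace E] in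
lemma fderiv_shift (f : E → ℝ) (x y : E) :
    fderiv ℝ (fun z => f (z - x)) y = fderiv ℝ f (y - x) := by
  by_cases h : DifferentiableAt ℝ f (y - x)
  · have := (h.hasFDerivAt.comp y ((hasFDerivAt_id y).sub_const x)).fderiv
    simpa [Function.comp_def] using this
  · rw [fderiv_zero_of_not_differentiableAt h, fderiv_zero_of_not_differentiableAt]
    intro hc
    apply h
    have h2 : DifferentiableAt ℝ (fun z : E => z + x) (y - x) :=
      (differentiableAt_id.add_const x)
    have h3 : DifferentiableAt ℝ ((fun z => f (z - x)) ∘ (fun z : E => z + x)) (y - x) := by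
      have hc' : DifferentiableAt ℝ (fun z => f (z - x)) (y - x + x) := by
        rwa [sub_add_cancel]
      exact DifferentiableAt.comp (y - x) hc' h2
    have h4 : ((fun z => f (z - x)) ∘ (fun z : E => z + x)) = f := by
      funext z; simp [Function.comp]
    rwa [h4] at h3

lemma gradient_shift (f : E → ℝ) (x y : E) :
    gradient (fun z => f (z - x)) y = gradient f (y - x) := by
  simp only [gradient, fderiv_shift]

lemma gradient_continuousOn {f : E → ℝ} {s : Set E} (hf : ContDiffOn ℝ 2 f s)
    (hs : IsOpen s) : ContinuousOn (gradient f) s := by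
  have h1 : ContinuousOn (fderiv ℝ f) s :=
    hf.continuousOn_fderiv_of_isOpen hs (by norm_num)
  have : gradient f = fun y => (InnerProductSpace.toDual ℝ E).symm (fderiv ℝ f y) := rfl
  rw [this]
  exact (InnerProductSpace.toDual ℝ E).symm.continuous.comp_continuousOn h1

lemma gradient_measurable {m : ℕ} (f : EuclideanSpace ℝ (Fin m) → ℝ) :
    Measurable (gradient f) := by
  have : gradient f = fun y =>
      (InnerProductSpace.toDual ℝ (EuclideanSpace ℝ (Fin m))).symm (fderiv ℝ f y) := rfl
  rw [this]
  exact ((InnerProductSpace.toDual ℝ _).symm.continuous.measurable).comp (measurable_fderiv ℝ f)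






lemma exists_orth (m : ℕ) (hm : 2 ≤ m) (b : EuclideanSpace ℝ (Fin m)) (hb : b ≠ 0) :
    ∃ w : EuclideanSpace ℝ (Fin m), ‖w‖ = 1 ∧ (inner ℝ b w : ℝ) = 0 := by
  set S := (ℝ ∙ b)ᗮ with hS
  have h1 : Module.finrank ℝ (ℝ ∙ b) + Module.finrank ℝ S = m := by
    rw [Submodule.finrank_add_finrank_orthogonal]
    simp [finrank_euclideanSpace]
  have h2 : Module.finrank ℝ (ℝ ∙ b) = 1 := finrank_span_singleton hb
  have h3 : 0 < Module.finrank ℝ S := by omega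
  have : Nontrivial S := Module.finrank_pos_iff.mp h3
  obtain ⟨w0, hw0⟩ := exists_ne (0 : S)
  have hw0' : (w0 : EuclideanSpace ℝ (Fin m)) ≠ 0 := fun h => hw0 (Subtype.ext h)
  refine ⟨‖(w0 : EuclideanSpace ℝ (Fin m))‖⁻¹ • w0, ?_, ?_⟩
  · rw [norm_smul, norm_inv, norm_norm, inv_mul_cancel₀ (norm_ne_zero_iff.mpr hw0')]
  · rw [real_inner_smul_right]
    have h4 : (inner ℝ b (w0 : EuclideanSpace ℝ (Fin m)) : ℝ) = 0 := by
      have h5 := w0.2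
      rw [Submodule.mem_orthogonal] at h5
      exact h5 b (Submodule.mem_span_singleton_self b)
    rw [h4, mul_zero]

lemma exists_u (m : ℕ) (hm : 2 ≤ m) (b q : EuclideanSpace ℝ (Fin m)) (hb : b ≠ 0) (hq : ‖q‖ = 1)
    (θ : ℝ) (hθ1 : 0 < θ) (hθ2 : θ < π) :
    ∃ u : EuclideanSpace ℝ (Fin m), ‖u‖ = 1 ∧ ‖b‖ * Real.cos (θ/2) < (inner ℝ u b : ℝ) ∧ (inner ℝ u q : ℝ) < 1 := by
  have hbn : (0:ℝ) < ‖b‖ := norm_pos_iff.mpr hb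
  obtain ⟨w, hw1, hw2⟩ := exists_orth m hm b hb
  have hwb : (inner ℝ w b : ℝ) = 0 := by rw [real_inner_comm]; exact hw2
  obtain ⟨e, hen, heb, hew⟩ : ∃ e : EuclideanSpace ℝ (Fin m), ‖e‖ = 1 ∧ (inner ℝ e b : ℝ) = ‖b‖ ∧
      (inner ℝ e w : ℝ) = 0 := by
    refine ⟨‖b‖⁻¹ • b, ?_, ?_, ?_⟩
    · rw [norm_smul, norm_inv, norm_norm, inv_mul_cancel₀ hbn.ne']
    · rw [real_inner_smul_left, real_inner_self_eq_norm_mul_norm]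
      field_simp
    · rw [real_inner_smul_left, hw2, mul_zero]
  have hwe : (inner ℝ w e : ℝ) = 0 := by rw [real_inner_comm]; exact hew
  have hcos : Real.cos (θ/2) < 1 := by
    have h := Real.cos_lt_cos_of_nonneg_of_le_pi (le_refl (0:ℝ))
      (show θ/2 ≤ π by linarith) (show (0:ℝ) < θ/2 by linarith)
    rwa [Real.cos_zero] at h
  by_cases hcase : e = q
  · refine ⟨Real.cos (θ/4) • e + Real.sin (θ/4) • w, ?_, ?_, ?_⟩
    · have hn2 : ‖Real.cos (θ/4) • e + Real.sin (θ/4) • w‖^2 = 1 := by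
        rw [@norm_add_sq_real, real_inner_smul_left, real_inner_smul_right, hew,
          norm_smul, norm_smul, hen, hw1]
        simp only [mul_zero, mul_one, Real.norm_eq_abs]
        nlinarith [Real.sin_sq_add_cos_sq (θ/4), sq_abs (Real.cos (θ/4)),
          sq_abs (Real.sin (θ/4))]
      nlinarith [norm_nonneg (Real.cos (θ/4) • e + Real.sin (θ/4) • w)]
    · rw [inner_add_left, real_inner_smul_left, real_inner_smul_left, heb, hwb,
        mul_zero, add_zero]
      have h4 : Real.cos (θ/2) < Real.cos (θ/4) :=
        Real.cos_lt_cos_of_nonneg_of_le_pi (by linarith) (by linarith) (by linarith)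
      nlinarith
    · rw [← hcase, inner_add_left, real_inner_smul_left, real_inner_smul_left,
        real_inner_self_eq_norm_mul_norm, hen, hwe, mul_zero, add_zero]
      have h5 : Real.cos (θ/4) < 1 := by
        have h := Real.cos_lt_cos_of_nonneg_of_le_pi (le_refl (0:ℝ))
          (show θ/4 ≤ π by linarith) (show (0:ℝ) < θ/4 by linarith)
        rwa [Real.cos_zero] at h
      nlinarith
  · refine ⟨e, hen, by rw [heb]; nlinarith, ?_⟩
    have h6 : (0:ℝ) < ‖e - q‖^2 :=
      pow_pos (norm_pos_iff.mpr (sub_ne_zero_of_ne hcase)) 2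
    rw [@norm_sub_sq_real, hen, hq] at h6
    nlinarith

lemma sq_norm_le_two_add {E : Type*} [NormedAddCommGroup E] (a g : E) :
    ‖g‖^2 ≤ 2*‖a‖^2 + 2*‖a - g‖^2 := by
  have htri : ‖g‖ ≤ ‖a‖ + ‖a - g‖ := by
    have h := norm_sub_le a (a - g)
    have heq : a - (a - g) = g := by abel
    rwa [heq] at h
  calc ‖g‖^2 ≤ (‖a‖ + ‖a - g‖)^2 := by
        apply pow_le_pow_left₀ (norm_nonneg _) htri
    _ = ‖a‖^2 + 2*‖a‖*‖a - g‖ + ‖a - g‖^2 := by ring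
    _ ≤ ‖a‖^2 + (‖a‖^2 + ‖a - g‖^2) + ‖a - g‖^2 := by
        linarith [two_mul_le_add_sq ‖a‖ ‖a - g‖]
    _ = 2*‖a‖^2 + 2*‖a - g‖^2 := by ring

end Aux

set_option maxHeartbeats 2000000 in
/-- Lemma 2.1: blow-up of the needle sequence on every finite cone with vertex
at the tip `x` of the needle `σ` (a non self-intersecting piecewise linear curve `γ` in
`closure Ω` joining a boundary point to `x`, with all other points inside `Ω`); the comparison
function `G` is harmonic off `0` and has infinite Dirichlet energy on every finite cone with
vertex `0`. -/
theorem stmt_0 (m : ℕ) (hm : m = 2 ∨ m = 3)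
    (Ω : Set (EuclideanSpace ℝ (Fin m))) (hΩo : IsOpen Ω) (hΩconn : IsConnected Ω)
    (hΩb : Bornology.IsBounded Ω)
    (G : EuclideanSpace ℝ (Fin m) → ℝ)
    (hGharm : HarmOn m G {y | y ≠ 0})
    (hGblow : ∀ V, IsFiniteCone m 0 V →
      ∫⁻ y in V, ENNReal.ofReal (‖gradient G y‖ ^ 2) = ⊤)
    (x : EuclideanSpace ℝ (Fin m)) (hx : x ∈ Ω)
    -- the needle σ, parametrized by the curve γ
    (γ : ℝ → EuclideanSpace ℝ (Fin m)) (σ : Set (EuclideanSpace ℝ (Fin m)))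
    (hσ : σ = γ '' Set.Icc 0 1)
    (hγcont : ContinuousOn γ (Set.Icc 0 1))
    (hγinj : Set.InjOn γ (Set.Icc 0 1))
    (hγPL : ∃ (k : ℕ) (t : Fin (k + 1) → ℝ), StrictMono t ∧ t 0 = 0 ∧ t (Fin.last k) = 1 ∧
      ∀ i : Fin k, ∃ p q : EuclideanSpace ℝ (Fin m),
        ∀ s ∈ Set.Icc (t i.castSucc) (t i.succ), γ s = p + s • q)
    (hγtip : γ 0 = x) (hγbd : γ 1 ∈ frontier Ω)
    (hγin : ∀ s : ℝ, 0 ≤ s → s < 1 → γ s ∈ Ω)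
    (hγcl : ∀ s ∈ Set.Icc (0:ℝ) 1, γ s ∈ closure Ω)
    -- the needle sequence
    (v : ℕ → EuclideanSpace ℝ (Fin m) → ℝ)
    (hvharm : ∀ n, HarmOn m (v n) Ω)
    (hvL2 : ∀ n, IntegrableOn (fun y => (v n y) ^ 2) Ω ∧
      IntegrableOn (fun y => ‖gradient (v n) y‖ ^ 2) Ω)
    (hvconv : ∀ K : Set (EuclideanSpace ℝ (Fin m)), IsCompact K → K ⊆ Ω \ σ →
      Filter.Tendsto (fun n =>
        (∫ y in K, (v n y - G (y - x)) ^ 2) +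
          ∫ y in K, ‖gradient (v n) y - gradient (fun z => G (z - x)) y‖ ^ 2)
        Filter.atTop (nhds 0)) :
    ∀ V, IsFiniteCone m x V →
      Filter.Tendsto (fun n => ∫⁻ y in V ∩ Ω, ENNReal.ofReal (‖gradient (v n) y‖ ^ 2))
        Filter.atTop (nhds ⊤) := by
  intro V hV
  obtain ⟨ρ, b, θ, hρ, hb, hθ1, hθ2, hVeq⟩ := hV
  have hm2 : 2 ≤ m := by rcases hm with h | h <;> omega
  haveI hnt : Nontrivial (EuclideanSpace ℝ (Fin m)) := by
    apply Module.nontrivial_of_finrank_pos (R := ℝ)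
    rw [finrank_euclideanSpace, Fintype.card_fin]; omega
  -- the initial segment of the needle
  obtain ⟨k, t, htmono, ht0, htlast, hseg⟩ := hγPL
  have hk : k ≠ 0 := by
    rintro rfl
    rw [show Fin.last 0 = 0 from rfl, ht0] at htlast
    norm_num at htlast
  set i0 : Fin k := ⟨0, Nat.pos_of_ne_zero hk⟩ with hi0
  obtain ⟨p, q0, hpq⟩ := hseg i0
  have hcast0 : t i0.castSucc = 0 := by
    rw [show i0.castSucc = (0 : Fin (k+1)) from rfl]; exact ht0
  have ht1pos : 0 < t i0.succ := by
    have h := htmono (Fin.castSucc_lt_succ (i := i0))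
    rwa [hcast0] at h
  have ht1le : t i0.succ ≤ 1 := by
    have h := htmono.monotone (Fin.le_last i0.succ)
    rwa [htlast] at h
  set t1 : ℝ := t i0.succ with ht1def
  have hp : p = x := by
    have h0 := hpq 0 ⟨hcast0.le, ht1pos.le⟩
    rw [hγtip] at h0
    simp only [zero_smul, add_zero] at h0
    exact h0.symm
  have hγseg : ∀ s : ℝ, 0 ≤ s → s ≤ t1 → γ s = x + s • q0 := by
    intro s h1 h2
    have h := hpq s ⟨by rw [hcast0]; exact h1, h2⟩
    rwa [hp] at h
  have hq0 : q0 ≠ 0 := by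
    intro h
    have h1 : γ t1 = γ 0 := by
      rw [hγseg t1 ht1pos.le le_rfl, h, hγtip]; simp
    have h2 := hγinj ⟨ht1pos.le, ht1le⟩ ⟨le_rfl, zero_le_one⟩ h1
    linarith
  have hq0n : (0:ℝ) < ‖q0‖ := norm_pos_iff.mpr hq0
  set qh : EuclideanSpace ℝ (Fin m) := ‖q0‖⁻¹ • q0 with hqh
  have hqhn : ‖qh‖ = 1 := by
    rw [hqh, norm_smul, norm_inv, norm_norm, inv_mul_cancel₀ hq0n.ne']
  obtain ⟨u, hu1, hub, huq⟩ := exists_u m hm2 b qh hb hqhn θ hθ1 hθ2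
  have hu0 : u ≠ 0 := by intro h; rw [h, norm_zero] at hu1; norm_num at hu1
  have hbn : (0:ℝ) < ‖b‖ := norm_pos_iff.mpr hb
  -- the angular parameter δ
  set c : ℝ := (inner ℝ u b : ℝ) - ‖b‖ * Real.cos (θ/2) with hc
  have hcpos : 0 < c := by rw [hc]; linarith
  set c2 : ℝ := 1 - (inner ℝ u qh : ℝ) with hc2
  have hc2pos : 0 < c2 := by rw [hc2]; linarith
  set δ : ℝ := min (c^2/(4*‖b‖^2)) (min (c2/2) (1/2)) with hδ
  have hδpos : 0 < δ :=
    lt_min (by positivity) (lt_min (by positivity) (by norm_num))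
  have hδhalf : δ ≤ 1/2 := le_trans (min_le_right _ _) (min_le_right _ _)
  have hδc2 : δ < c2 :=
    lt_of_le_of_lt (le_trans (min_le_right _ _) (min_le_left _ _)) (by linarith)
  have hδc : 4 * δ * ‖b‖^2 ≤ c^2 := by
    have h := min_le_left (c^2/(4*‖b‖^2)) (min (c2/2) (1/2))
    rw [← hδ, le_div_iff₀ (by positivity)] at h
    linarith
  clear_value c c2 δ
  -- the cap property
  have hcap : ∀ d : EuclideanSpace ℝ (Fin m), ‖d‖ = 1 → 1 - δ ≤ (inner ℝ d u : ℝ) →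
      ‖b‖ * Real.cos (θ/2) < (inner ℝ d b : ℝ) := by
    intro d hd hdu
    have h1 : ‖d - u‖^2 ≤ 2*δ := by
      rw [@norm_sub_sq_real, hd, hu1]
      nlinarith
    have h2 := abs_real_inner_le_norm (d - u) b
    have h3 : (inner ℝ d b : ℝ) = (inner ℝ u b : ℝ) + (inner ℝ (d - u) b : ℝ) := by
      rw [inner_sub_left]; ring
    have h4 : (‖d - u‖ * ‖b‖)^2 ≤ 2*δ*‖b‖^2 := by
      nlinarith [norm_nonneg (d - u), sq_nonneg ‖b‖]
    have h5 : ‖d - u‖ * ‖b‖ < c := by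
      nlinarith [mul_nonneg (norm_nonneg (d - u)) (norm_nonneg b)]
    have h6 := (abs_le.mp h2).1
    rw [h3]
    have h7 : -c < (inner ℝ (d - u) b : ℝ) := by linarith
    linarith [hc]
  -- choice of the radius ρ'
  obtain ⟨r1, hr1pos, hr1⟩ := Metric.isOpen_iff.mp hΩo x hx
  set T : Set (EuclideanSpace ℝ (Fin m)) := γ '' Set.Icc t1 1 with hT
  have hTcpt : IsCompact T :=
    isCompact_Icc.image_of_continuousOn (hγcont.mono (Set.Icc_subset_Icc ht1pos.le le_rfl))
  have hxT : x ∉ T := by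
    rintro ⟨s, hs, hsx⟩
    have h1 : s = 0 := hγinj ⟨le_trans ht1pos.le hs.1, hs.2⟩ ⟨le_rfl, zero_le_one⟩
      (by rw [hsx, hγtip])
    linarith [hs.1]
  have hTne : T.Nonempty := ⟨γ t1, t1, ⟨le_rfl, ht1le⟩, rfl⟩
  set d0 : ℝ := Metric.infDist x T with hd0
  have hd0pos : 0 < d0 := by
    rw [hd0]
    exact (hTcpt.isClosed.notMem_iff_infDist_pos hTne).mp hxT
  set ρ' : ℝ := min (ρ/2) (min (r1/2) (d0/2)) with hρ'def
  have hρ'pos : 0 < ρ' := lt_min (by linarith) (lt_min (by linarith) (by linarith))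
  have hρ'ρ : ρ' < ρ := lt_of_le_of_lt (min_le_left _ _) (by linarith)
  have hρ'r1 : ρ' < r1 :=
    lt_of_le_of_lt (le_trans (min_le_right _ _) (min_le_left _ _)) (by linarith)
  have hρ'd0 : ρ' < d0 :=
    lt_of_le_of_lt (le_trans (min_le_right _ _) (min_le_right _ _)) (by linarith)
  -- the compact truncated cones
  set K : ℝ → Set (EuclideanSpace ℝ (Fin m)) := fun ε =>
    {y | ε ≤ ‖y - x‖ ∧ ‖y - x‖ ≤ ρ' ∧ (1-δ) * ‖y - x‖ ≤ (inner ℝ (y - x) u : ℝ)} with hKdef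
  have hcont1 : Continuous fun y : EuclideanSpace ℝ (Fin m) => ‖y - x‖ :=
    (continuous_id.sub continuous_const).norm
  have hcont2 : Continuous fun y : EuclideanSpace ℝ (Fin m) => (inner ℝ (y - x) u : ℝ) :=
    (continuous_id.sub continuous_const).inner continuous_const
  have hKclosed : ∀ ε, IsClosed (K ε) := by
    intro ε
    have heq : K ε = {y | ε ≤ ‖y - x‖} ∩ ({y | ‖y - x‖ ≤ ρ'} ∩
        {y | (1-δ) * ‖y - x‖ ≤ (inner ℝ (y - x) u : ℝ)}) := by
      ext y; simp only [hKdef, Set.mem_setOf_eq, Set.mem_inter_iff]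
    rw [heq]
    exact (isClosed_le continuous_const hcont1).inter
      ((isClosed_le hcont1 continuous_const).inter
        (isClosed_le (continuous_const.mul hcont1) hcont2))
  have hKcpt : ∀ ε, IsCompact (K ε) := by
    intro ε
    apply Metric.isCompact_of_isClosed_isBounded (hKclosed ε)
    apply (Metric.isBounded_closedBall (x := x) (r := ρ')).subset
    intro y hy
    rw [Metric.mem_closedBall, dist_eq_norm]
    exact hy.2.1
  have hKV : ∀ ε, 0 < ε → K ε ⊆ V := by
    intro ε hε y hy
    obtain ⟨hy1, hy2, hy3⟩ := hy
    have hr0 : 0 < ‖y - x‖ := lt_of_lt_of_le hε hy1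
    rw [hVeq]
    constructor
    · rw [Metric.mem_ball, dist_eq_norm]; linarith
    · set r : ℝ := ‖y - x‖ with hrdef
      set d : EuclideanSpace ℝ (Fin m) := r⁻¹ • (y - x) with hddef
      have hd1 : ‖d‖ = 1 := by
        rw [hddef, norm_smul, norm_inv, norm_norm, ← hrdef, inv_mul_cancel₀ hr0.ne']
      have hdu : 1 - δ ≤ (inner ℝ d u : ℝ) := by
        rw [hddef, real_inner_smul_left]
        rw [show (1 - δ) = r⁻¹ * ((1-δ) * r) by field_simp]
        exact mul_le_mul_of_nonneg_left hy3 (inv_nonneg.mpr hr0.le)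
      have hdb := hcap d hd1 hdu
      rw [hddef, real_inner_smul_left] at hdb
      have hineq : r * (‖b‖ * Real.cos (θ/2)) < r * (r⁻¹ * (inner ℝ (y - x) b : ℝ)) :=
        mul_lt_mul_of_pos_left hdb hr0
      rw [show r * (r⁻¹ * (inner ℝ (y - x) b : ℝ)) = (inner ℝ (y - x) b : ℝ) by field_simp] at hineq
      simp only [Set.mem_setOf_eq]
      rw [← hrdef]
      linarith
  have hKΩ : ∀ ε, K ε ⊆ Ω := by
    intro ε y hy
    apply hr1
    rw [Metric.mem_ball, dist_eq_norm]
    exact lt_of_le_of_lt hy.2.1 hρ'r1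
  have hKσ : ∀ ε, 0 < ε → ∀ y ∈ K ε, y ∉ σ := by
    intro ε hε y hy hyσ
    rw [hσ] at hyσ
    obtain ⟨s, hs01, hsy⟩ := hyσ
    obtain ⟨hy1, hy2, hy3⟩ := hy
    by_cases hs0 : s = 0
    · rw [hs0, hγtip] at hsy
      rw [← hsy] at hy1
      simp at hy1
      linarith
    · have hspos : 0 < s := lt_of_le_of_ne hs01.1 (Ne.symm hs0)
      by_cases hst : s < t1
      · have hys : y = x + s • q0 := by rw [← hsy]; exact hγseg s hspos.le hst.le
        have hyx : y - x = s • q0 := by rw [hys]; abel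
        rw [hyx] at hy3
        rw [norm_smul, real_inner_smul_left, Real.norm_eq_abs, abs_of_pos hspos] at hy3
        -- hy3 : (1-δ) * (s * ‖q0‖) ≤ s * ⟪q0, u⟫
        have hqu : (inner ℝ q0 u : ℝ) = ‖q0‖ * (inner ℝ u qh : ℝ) := by
          rw [hqh, real_inner_smul_right, real_inner_comm]
          field_simp
        rw [hqu] at hy3
        -- ⟪u,qh⟫ < 1 - δ  from δ < c2
        have hlt : (inner ℝ u qh : ℝ) < 1 - δ := by
          rw [hc2] at hδc2; linarith
        nlinarith [mul_pos hspos hq0n,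
          mul_lt_mul_of_pos_left hlt (mul_pos hspos hq0n)]
      · have hyT : y ∈ T := ⟨s, ⟨not_lt.mp hst, hs01.2⟩, hsy⟩
        have h1 : d0 ≤ dist x y := Metric.infDist_le_dist_of_mem hyT
        rw [dist_eq_norm, norm_sub_rev] at h1
        linarith
  -- the comparison cone at the origin and the energy measure
  set θ'' : ℝ := 2 * Real.arccos (1 - δ/2) with hθ''def
  have h1δ : (0:ℝ) < 1 - δ/2 := by linarith
  have h1δ' : (1:ℝ) - δ/2 < 1 := by linarith
  have hθ''1 : 0 < θ'' := by
    rw [hθ''def]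
    have := Real.arccos_pos.mpr h1δ'
    linarith
  have hθ''2 : θ'' < Real.pi := by
    rw [hθ''def]
    have := Real.arccos_lt_pi_div_two.mpr h1δ
    linarith [Real.pi_pos]
  have hcosθ'' : Real.cos (θ''/2) = 1 - δ/2 := by
    rw [hθ''def, mul_div_cancel_left₀ _ (two_ne_zero)]
    exact Real.cos_arccos (by linarith) (by linarith)
  set V₀ : Set (EuclideanSpace ℝ (Fin m)) := Metric.ball (0 : EuclideanSpace ℝ (Fin m)) ρ' ∩
      {y | (inner ℝ (y - 0) u : ℝ) > ‖y - 0‖ * ‖u‖ * Real.cos (θ''/2)} with hV₀def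
  have hV₀cone : IsFiniteCone m 0 V₀ := ⟨ρ', u, θ'', hρ'pos, hu0, hθ''1, hθ''2, rfl⟩
  have hV₀open : IsOpen V₀ := by
    apply Metric.isOpen_ball.inter
    exact isOpen_lt (Continuous.mul (Continuous.mul
      (continuous_id.sub continuous_const).norm continuous_const) continuous_const)
      ((continuous_id.sub continuous_const).inner continuous_const)
  set F : EuclideanSpace ℝ (Fin m) → ENNReal := fun z => ENNReal.ofReal (‖gradient G z‖^2)
    with hFdef
  have hFmeas : Measurable F :=
    (((gradient_measurable G).norm).pow_const 2).ennreal_ofReal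
  set f : EuclideanSpace ℝ (Fin m) → ENNReal := fun y => F (y - x) with hfdef
  have hfmeas : Measurable f :=
    hFmeas.comp ((continuous_id.sub continuous_const).measurable)
  set μ' : Measure (EuclideanSpace ℝ (Fin m)) := volume.withDensity f with hμ'def
  set W : Set (EuclideanSpace ℝ (Fin m)) := (fun y => y - x) ⁻¹' V₀ with hWdef
  have hWopen : IsOpen W := hV₀open.preimage (continuous_id.sub continuous_const)
  have hWimg : W = (fun z => z + x) '' V₀ := by
    ext y
    simp only [hWdef, Set.mem_preimage, Set.mem_image]
    constructor
    · intro h; exact ⟨y - x, h, by abel⟩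
    · rintro ⟨z, hz, rfl⟩; simpa using hz
  have hWtop : μ' W = ⊤ := by
    rw [hμ'def, withDensity_apply _ hWopen.measurableSet, hWimg]
    rw [← (measurePreserving_add_right volume x).setLIntegral_comp_emb
      (MeasurableEquiv.addRight x).measurableEmbedding (fun y => f y) V₀]
    have heq : ∀ z, f (z + x) = F z := by intro z; rw [hfdef]; simp
    have heq2 : ∫⁻ z in V₀, f (z + x) = ∫⁻ z in V₀, F z :=
      lintegral_congr fun z => heq z
    rw [heq2]
    exact hGblow V₀ hV₀cone
  have hμ'x : μ' {x} = 0 := by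
    rw [hμ'def, withDensity_apply _ (measurableSet_singleton x),
      Measure.restrict_eq_zero.mpr (measure_singleton x), lintegral_zero_measure]
  have hsubU : W \ {x} ⊆ ⋃ n : ℕ, K (1/(n+1)) := by
    rintro y ⟨hyW, hyx⟩
    have hyx' : y ≠ x := by simpa using hyx
    have hr : 0 < ‖y - x‖ := norm_pos_iff.mpr (sub_ne_zero_of_ne hyx')
    obtain ⟨n, hn⟩ := exists_nat_one_div_lt hr
    apply Set.mem_iUnion.mpr
    refine ⟨n, hn.le, ?_, ?_⟩
    · have h1 := hyW.1
      rw [Metric.mem_ball, dist_zero_right] at h1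
      exact h1.le
    · have h2 := hyW.2
      simp only [Set.mem_setOf_eq, sub_zero] at h2
      rw [hu1, hcosθ''] at h2
      nlinarith
  have hmono : Monotone fun n : ℕ => K (1/((n:ℝ)+1)) := by
    intro a b hab y hy
    refine ⟨le_trans ?_ hy.1, hy.2⟩
    apply one_div_le_one_div_of_le (by positivity)
    have : (a:ℝ) ≤ b := Nat.cast_le.mpr hab
    linarith
  have hsup : ⨆ n : ℕ, μ' (K (1/((n:ℝ)+1))) = ⊤ := by
    rw [← hmono.directed_le.measure_iUnion]
    apply top_unique
    calc ⊤ = μ' W := hWtop.symm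
      _ ≤ μ' (W \ {x}) + μ' {x} := by
          apply le_trans (measure_mono (show W ⊆ (W \ {x}) ∪ {x} by
            intro z hz
            by_cases hzx : z = x
            · exact Or.inr (by simp [hzx])
            · exact Or.inl ⟨hz, by simp [hzx]⟩))
          exact measure_union_le _ _
      _ ≤ μ' (⋃ n : ℕ, K (1/((n:ℝ)+1))) + 0 := by
          rw [hμ'x]
          exact add_le_add (measure_mono (μ := μ') hsubU) le_rfl
      _ = μ' (⋃ n : ℕ, K (1/((n:ℝ)+1))) := add_zero _
  -- main argument
  rw [ENNReal.tendsto_nhds_top_iff_nat]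
  intro N
  have hNlt : ((2*N+2 : ℕ) : ENNReal) < ⨆ n : ℕ, μ' (K (1/((n:ℝ)+1))) := by
    rw [hsup]; exact ENNReal.natCast_lt_top _
  obtain ⟨n0, hn0⟩ := lt_iSup_iff.mp hNlt
  set ε : ℝ := 1/((n0:ℝ)+1) with hεdef
  have hεpos : 0 < ε := by positivity
  set Kc : Set (EuclideanSpace ℝ (Fin m)) := K ε with hKc
  have hKcm : MeasurableSet Kc := (hKclosed ε).measurableSet
  have hA : ((2*N+2 : ℕ) : ENNReal) < ∫⁻ y in Kc, f y := by
    rw [← withDensity_apply f hKcm]; exact hn0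
  have hKcΩσ : Kc ⊆ Ω \ σ := fun y hy => ⟨hKΩ ε hy, hKσ ε hεpos y hy⟩
  have hconv := hvconv Kc (hKcpt ε) hKcΩσ
  have hsecond : Filter.Tendsto
      (fun n => ∫ y in Kc, ‖gradient (v n) y - gradient (fun z => G (z - x)) y‖^2)
      Filter.atTop (nhds 0) := by
    apply squeeze_zero (fun n => integral_nonneg fun y => sq_nonneg _) (fun n => ?_) hconv
    exact le_add_of_nonneg_left (integral_nonneg fun y => sq_nonneg _)
  have hgs : ∀ y : EuclideanSpace ℝ (Fin m),
      gradient (fun z => G (z - x)) y = gradient G (y - x) := gradient_shift G x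
  simp only [hgs] at hsecond
  -- continuity and integrability on Kc
  have hKcne0 : ∀ y ∈ Kc, y - x ≠ 0 := by
    intro y hy
    have := hy.1
    intro h
    rw [h, norm_zero] at this
    linarith
  have hGgradcont : ContinuousOn (fun y => gradient G (y - x)) Kc := by
    have h1 : ContinuousOn (gradient G) {y : EuclideanSpace ℝ (Fin m) | y ≠ 0} :=
      gradient_continuousOn hGharm.1 isOpen_compl_singleton
    exact h1.comp ((continuous_id.sub continuous_const).continuousOn)
      (fun y hy => hKcne0 y hy)
  have hvgradcont : ∀ n, ContinuousOn (gradient (v n)) Kc := fun n =>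
    (gradient_continuousOn (hvharm n).1 hΩo).mono (hKΩ ε)
  have hint : ∀ n, IntegrableOn
      (fun y => ‖gradient (v n) y - gradient G (y - x)‖^2) Kc := by
    intro n
    exact (((hvgradcont n).sub hGgradcont).norm.pow 2).integrableOn_compact (hKcpt ε)
  have hD : Filter.Tendsto
      (fun n => ∫⁻ y in Kc, ENNReal.ofReal (‖gradient (v n) y - gradient G (y - x)‖^2))
      Filter.atTop (nhds 0) := by
    have heq : ∀ n, ∫⁻ y in Kc, ENNReal.ofReal (‖gradient (v n) y - gradient G (y - x)‖^2)
        = ENNReal.ofReal (∫ y in Kc, ‖gradient (v n) y - gradient G (y - x)‖^2) := by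
      intro n
      rw [← ofReal_integral_eq_lintegral_ofReal (hint n)
        (Filter.Eventually.of_forall fun y => sq_nonneg _)]
    simp only [heq]
    have h := ENNReal.tendsto_ofReal hsecond
    simpa using h
  have hDev : ∀ᶠ n in Filter.atTop,
      (∫⁻ y in Kc, ENNReal.ofReal (‖gradient (v n) y - gradient G (y - x)‖^2)) < 1 :=
    hD.eventually_lt_const (by norm_num)
  filter_upwards [hDev] with n hDn
  set S : ENNReal := ∫⁻ y in Kc, ENNReal.ofReal (‖gradient (v n) y‖^2) with hSdef
  set D : ENNReal := ∫⁻ y in Kc, ENNReal.ofReal (‖gradient (v n) y - gradient G (y - x)‖^2)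
    with hDdef
  have hpoint : ∀ y, f y ≤ 2 * ENNReal.ofReal (‖gradient (v n) y‖^2)
      + 2 * ENNReal.ofReal (‖gradient (v n) y - gradient G (y - x)‖^2) := by
    intro y
    rw [hfdef, hFdef]
    simp only []
    have hof : ∀ a : ℝ, 0 ≤ a → (2:ENNReal) * ENNReal.ofReal a = ENNReal.ofReal (2*a) := by
      intro a ha
      rw [ENNReal.ofReal_mul (by norm_num : (0:ℝ) ≤ 2)]
      norm_num
    rw [hof _ (by positivity), hof _ (by positivity),
      ← ENNReal.ofReal_add (by positivity) (by positivity)]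
    apply ENNReal.ofReal_le_ofReal
    exact sq_norm_le_two_add (gradient (v n) y) (gradient G (y - x))
  have hmeas1 : Measurable fun y => (2:ENNReal) * ENNReal.ofReal (‖gradient (v n) y‖^2) :=
    ((((gradient_measurable (v n)).norm).pow_const 2).ennreal_ofReal).const_mul 2
  have hAS : (∫⁻ y in Kc, f y) ≤ 2*S + 2*D := by
    calc (∫⁻ y in Kc, f y)
        ≤ ∫⁻ y in Kc, (2 * ENNReal.ofReal (‖gradient (v n) y‖^2)
          + 2 * ENNReal.ofReal (‖gradient (v n) y - gradient G (y - x)‖^2)) :=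
          lintegral_mono hpoint
      _ = 2*S + 2*D := by
          rw [lintegral_add_left hmeas1,
            lintegral_const_mul' 2 _ (by norm_num : (2:ENNReal) ≠ ⊤),
            lintegral_const_mul' 2 _ (by norm_num : (2:ENNReal) ≠ ⊤)]
  have hfinal : (N : ENNReal) < S := by
    by_contra hcon
    push_neg at hcon
    have h2 : ((2*N+2 : ℕ) : ENNReal) < 2*S + 2*D := lt_of_lt_of_le hA hAS
    have h3 : 2*S + 2*D ≤ 2*(N:ENNReal) + 2 := by
      apply add_le_add
      · exact mul_le_mul_right hcon 2
      · calc 2*D ≤ 2*1 := mul_le_mul_right hDn.le 2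
          _ = 2 := mul_one 2
    have h4 : ((2*N+2 : ℕ) : ENNReal) = 2*(N:ENNReal) + 2 := by push_cast; ring
    rw [h4] at h2
    exact absurd h2 (not_lt.mpr h3)
  calc (N : ENNReal) < S := hfinal
    _ ≤ ∫⁻ y in V ∩ Ω, ENNReal.ofReal (‖gradient (v n) y‖^2) :=
        lintegral_mono_set (fun y hy => ⟨hKV ε hεpos hy, hKΩ ε hy⟩)
end

section
/- Let λ ≥ 0 be real and let 0 < a < 1. Then (1/2)∫_{−1}^{1} e^{λu}/(a² + u²) du = (π/2) · e^{iλa}/a − (i/2) ∫₀^{π} e^{λ(cos θ + i sin θ)} e^{iθ}/(a² + e^{2iθ}) dθ. In particular, ∫₀^{1} (e^{λu} + e^{−λu})/(2(a² + u²)) du − (π/2) e^{iλa}/a equals a quantity that extends to a smooth function of a on a neighborhood of [0,1). -/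
open MeasureTheory intervalIntegral Complex
open scoped NNReal ENNReal

noncomputable def ctr (f : ℂ → ℂ) : ℂ :=
  (∫ u in (-1:ℝ)..1, f u) +
    ∫ θ in (0:ℝ)..Real.pi, f (Complex.exp (Complex.I * θ)) * (Complex.I * Complex.exp (Complex.I * θ))

lemma continuous_cexpIθ : Continuous fun θ : ℝ => Complex.exp (Complex.I * θ) := by
  fun_prop

lemma hasDerivAt_cexpIθ (θ : ℝ) :
    HasDerivAt (fun t : ℝ => Complex.exp (Complex.I * t))
      (Complex.I * Complex.exp (Complex.I * θ)) θ := by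
  have h : HasDerivAt (fun z : ℂ => Complex.exp (Complex.I * z))
      (Complex.I * Complex.exp (Complex.I * (θ:ℂ))) (θ:ℂ) := by
    have h0 := (Complex.hasDerivAt_exp (Complex.I * (θ:ℂ))).comp (θ:ℂ)
      ((hasDerivAt_id (θ:ℂ)).const_mul Complex.I)
    simp only [Function.comp_def] at h0
    exact h0.congr_deriv (by ring)
  exact h.comp_ofReal

lemma abs_cexpIθ (θ : ℝ) : ‖Complex.exp (Complex.I * θ)‖ = 1 := by
  rw [mul_comm]; exact Complex.norm_exp_ofReal_mul_I θ

lemma cexpIpi : Complex.exp (Complex.I * (Real.pi : ℂ)) = -1 := by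
  rw [mul_comm]; exact Complex.exp_pi_mul_I

lemma ctr_eq_zero_of_primitive {f F : ℂ → ℂ} {s : Set ℂ}
    (hseg : ∀ u : ℝ, u ∈ Set.Icc (-1:ℝ) 1 → (u:ℂ) ∈ s)
    (harc : ∀ θ : ℝ, θ ∈ Set.Icc (0:ℝ) Real.pi → Complex.exp (Complex.I * θ) ∈ s)
    (hF : ∀ z ∈ s, HasDerivAt F (f z) z) (hf : ContinuousOn f s) : ctr f = 0 := by
  have h1 : (∫ u in (-1:ℝ)..1, f u) = F 1 - F (-1) := by
    have := intervalIntegral.integral_eq_sub_of_hasDerivAt (f := fun u : ℝ => F u)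
      (f' := fun u : ℝ => f u) (a := (-1:ℝ)) (b := 1)
      (fun x hx => (hF _ (hseg x (by rwa [Set.uIcc_of_le (by norm_num)] at hx))).comp_ofReal)
      (ContinuousOn.intervalIntegrable (by
        apply hf.comp Complex.continuous_ofReal.continuousOn
        intro x hx
        exact hseg x (by rwa [Set.uIcc_of_le (by norm_num)] at hx)))
    simpa using this
  have h2 : (∫ θ in (0:ℝ)..Real.pi,
      f (Complex.exp (Complex.I * θ)) * (Complex.I * Complex.exp (Complex.I * θ)))
      = F (-1) - F 1 := by
    have hpi : (0:ℝ) ≤ Real.pi := Real.pi_pos.le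
    have := intervalIntegral.integral_eq_sub_of_hasDerivAt
      (f := fun θ : ℝ => F (Complex.exp (Complex.I * θ)))
      (f' := fun θ : ℝ => f (Complex.exp (Complex.I * θ)) * (Complex.I * Complex.exp (Complex.I * θ)))
      (a := (0:ℝ)) (b := Real.pi)
      (fun x hx => (hF _ (harc x (by rwa [Set.uIcc_of_le hpi] at hx))).comp x (hasDerivAt_cexpIθ x))
      (ContinuousOn.intervalIntegrable (by
        apply ContinuousOn.mul
        · apply hf.comp continuous_cexpIθ.continuousOn
          intro x hx
          exact harc x (by rwa [Set.uIcc_of_le hpi] at hx)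
        · exact (continuous_const.mul continuous_cexpIθ).continuousOn))
    rw [this]
    norm_num [cexpIpi]
  rw [ctr, h1, h2]; ring

lemma ctr_add_inv {a : ℝ} (ha : 0 < a) : ctr (fun z => (z + Complex.I * a)⁻¹) = 0 := by
  apply ctr_eq_zero_of_primitive (s := {z : ℂ | 0 < (z + Complex.I * a).im})
    (F := fun z => Complex.log (z + Complex.I * a))
  · intro u _
    simp [ha]
  · intro θ hθ
    have := Real.sin_nonneg_of_nonneg_of_le_pi hθ.1 hθ.2
    simp only [Set.mem_setOf_eq, Complex.add_im, Complex.mul_im, Complex.I_re, Complex.I_im,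
      Complex.ofReal_re, Complex.ofReal_im, Complex.exp_im]
    norm_num
    positivity
  · intro z hz
    have hmem : z + Complex.I * a ∈ Complex.slitPlane := Or.inr (ne_of_gt hz)
    have := (Complex.hasDerivAt_log hmem).comp z ((hasDerivAt_id z).add_const (Complex.I * a))
    simp only [Function.comp_def, mul_one] at this
    exact this
  · apply ContinuousOn.inv₀
    · fun_prop
    · intro z hz
      intro h
      have hz' : 0 < (z + Complex.I * (a:ℂ)).im := hz
      rw [h] at hz'
      simp at hz'


lemma hasDerivAt_cexpIz (z : ℂ) :
    HasDerivAt (fun w : ℂ => Complex.exp (Complex.I * w)) (Complex.I * Complex.exp (Complex.I * z)) z := by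
  have h0 := (Complex.hasDerivAt_exp (Complex.I * z)).comp z ((hasDerivAt_id z).const_mul Complex.I)
  simp only [Function.comp_def] at h0
  exact h0.congr_deriv (by ring)

lemma log_sub_log_pair {z w : ℂ} (h : ‖z‖ = ‖w‖) :
    Complex.log z - Complex.log w = ((Complex.arg z - Complex.arg w : ℝ) : ℂ) * Complex.I := by
  rw [Complex.log, Complex.log, h]
  push_cast
  ring

lemma arc_ne {a : ℝ} (ha : 0 < a) (ha1 : a < 1) (θ : ℝ) :
    Complex.exp (Complex.I * θ) - Complex.I * a ≠ 0 := by
  intro h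
  have h2 := congrArg norm (sub_eq_zero.mp h)
  rw [abs_cexpIθ, norm_mul, Complex.norm_I, Complex.norm_real, Real.norm_eq_abs, abs_of_pos ha] at h2
  nlinarith

lemma ctr_sub_inv {a : ℝ} (ha : 0 < a) (ha1 : a < 1) :
    ctr (fun z => (z - Complex.I * a)⁻¹) = 2 * Real.pi * Complex.I := by
  have hne : ∀ u : ℝ, ((u:ℂ) - Complex.I * a) ≠ 0 := by
    intro u h
    have := congrArg Complex.im h
    simp [ha.ne'] at this
  have h1 : (∫ u in (-1:ℝ)..1, ((u:ℂ) - Complex.I * a)⁻¹)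
      = Complex.log (1 - Complex.I * a) - Complex.log (-1 - Complex.I * a) := by
    have := intervalIntegral.integral_eq_sub_of_hasDerivAt
      (f := fun u : ℝ => Complex.log ((u:ℂ) - Complex.I * a))
      (f' := fun u : ℝ => ((u:ℂ) - Complex.I * a)⁻¹) (a := (-1:ℝ)) (b := 1)
      (fun x _ => by
        have hmem : ((x:ℂ) - Complex.I * a) ∈ Complex.slitPlane := Or.inr (by simp [ha.ne'])
        have h3 := (Complex.hasDerivAt_log hmem).comp (x:ℂ)
          ((hasDerivAt_id (x:ℂ)).sub_const (Complex.I * a))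
        simp only [Function.comp_def, mul_one] at h3
        exact h3.comp_ofReal)
      (((Complex.continuous_ofReal.sub continuous_const).inv₀ hne).intervalIntegrable _ _)
    simpa using this
  have h2 : (∫ θ in (0:ℝ)..Real.pi,
      (Complex.exp (Complex.I * θ) - Complex.I * a)⁻¹ * (Complex.I * Complex.exp (Complex.I * θ)))
      = Complex.log (-(a:ℂ) + Complex.I) - Complex.log (-(a:ℂ) - Complex.I) := by
    have hW : ∀ θ : ℝ, θ ∈ Set.Icc (0:ℝ) Real.pi →
        -Complex.I * (Complex.exp (Complex.I * θ) - Complex.I * a) ∈ Complex.slitPlane := by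
      intro θ hθ
      have he : Complex.exp (Complex.I * (θ:ℂ))
          = ((Real.cos θ : ℝ) : ℂ) + ((Real.sin θ : ℝ) : ℂ) * Complex.I := by
        rw [mul_comm, Complex.exp_mul_I, ← Complex.ofReal_cos, ← Complex.ofReal_sin]
      show 0 < _ ∨ _ ≠ 0
      rw [he]
      by_cases hc : Real.cos θ = 0
      · left
        have hs : Real.sin θ = 1 := by
          nlinarith [Real.sin_sq_add_cos_sq θ, Real.sin_nonneg_of_nonneg_of_le_pi hθ.1 hθ.2]
        simp [hc, hs]
        linarith
      · right
        simp [hc, Complex.cos_ofReal_re]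
    have := intervalIntegral.integral_eq_sub_of_hasDerivAt
      (f := fun θ : ℝ => Complex.log (-Complex.I * (Complex.exp (Complex.I * θ) - Complex.I * a)))
      (f' := fun θ : ℝ =>
        (Complex.exp (Complex.I * θ) - Complex.I * a)⁻¹ * (Complex.I * Complex.exp (Complex.I * θ)))
      (a := (0:ℝ)) (b := Real.pi)
      (fun x hx => by
        rw [Set.uIcc_of_le Real.pi_pos.le] at hx
        have hmem := hW x hx
        have hinner : HasDerivAt (fun z : ℂ => -Complex.I * (Complex.exp (Complex.I * z) - Complex.I * a))
            (-Complex.I * (Complex.I * Complex.exp (Complex.I * (x:ℂ)))) (x:ℂ) :=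
          ((hasDerivAt_cexpIz (x:ℂ)).sub_const (Complex.I * a)).const_mul (-Complex.I)
        have h3 := (Complex.hasDerivAt_log hmem).comp (x:ℂ) hinner
        simp only [Function.comp_def] at h3
        have h4 := h3.comp_ofReal
        refine h4.congr_deriv (Eq.symm ?_)
        rw [mul_inv]
        have hI : (-Complex.I)⁻¹ = Complex.I := by rw [inv_neg, Complex.inv_I, neg_neg]
        rw [hI]
        have := arc_ne ha ha1 x
        field_simp
        linear_combination Complex.I_sq)
      (by
        apply Continuous.intervalIntegrable
        have hc1 : Continuous fun θ : ℝ => Complex.exp (Complex.I * θ) := by fun_prop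
        exact ((hc1.sub continuous_const).inv₀ (arc_ne ha ha1)).mul (continuous_const.mul hc1))
    rw [this]
    simp only [Complex.ofReal_zero, mul_zero, Complex.exp_zero, cexpIpi]
    congr 1
    · congr 1
      linear_combination (a : ℂ) * Complex.I_sq
    · congr 1
      linear_combination (a : ℂ) * Complex.I_sq
  have habs1 : ‖(1 - Complex.I * a)‖ = ‖(-1 - Complex.I * a)‖ := by
    rw [Complex.norm_def, Complex.norm_def]
    congr 1
    simp [Complex.normSq_apply]
  have habs3 : ‖(-(a:ℂ) + Complex.I)‖ = ‖(-(a:ℂ) - Complex.I)‖ := by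
    rw [Complex.norm_def, Complex.norm_def]
    congr 1
    simp [Complex.normSq_apply]
  have hsq : Real.sqrt (a^2+1) ≠ 0 := by positivity
  have key : Real.arctan a⁻¹ = Real.arcsin (1 / Real.sqrt (a^2+1)) := by
    rw [Real.arctan_eq_arcsin]
    congr 1
    rw [show (1 + (a⁻¹)^2) = (a^2+1)/a^2 by field_simp]
    rw [Real.sqrt_div (by positivity), Real.sqrt_sq ha.le]
    field_simp
  have harg1 : Complex.arg (1 - Complex.I * a) = -Real.arctan a := by
    rw [Complex.arg_of_re_nonneg (by simp)]
    have : (1 - Complex.I * (a:ℂ)).im = -a := by simp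
    rw [this]
    have habs : ‖(1 - Complex.I * a)‖ = Real.sqrt (a^2+1) := by
      rw [Complex.norm_def]
      congr 1
      simp [Complex.normSq_apply]
      ring
    rw [habs, neg_div, Real.arcsin_neg, Real.arctan_eq_arcsin]
    congr 2
    ring_nf
  have harg2 : Complex.arg (-1 - Complex.I * a) = Real.arctan a - Real.pi := by
    rw [Complex.arg_of_re_neg_of_im_neg (by simp) (by simp [ha])]
    have h5 : (-(-1 - Complex.I * (a:ℂ))).im = a := by simp
    rw [h5]
    have habs : ‖(-1 - Complex.I * a)‖ = Real.sqrt (a^2+1) := by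
      rw [Complex.norm_def]
      congr 1
      simp [Complex.normSq_apply]
      ring
    rw [habs, Real.arctan_eq_arcsin]
    congr 3
    ring_nf
  have harg3 : Complex.arg (-(a:ℂ) + Complex.I) = Real.pi - Real.arctan a⁻¹ := by
    rw [Complex.arg_of_re_neg_of_im_nonneg (by simp [ha]) (by simp)]
    have h5 : (-(-(a:ℂ) + Complex.I)).im = -1 := by simp
    rw [h5]
    have habs : ‖(-(a:ℂ) + Complex.I)‖ = Real.sqrt (a^2+1) := by
      rw [Complex.norm_def]
      congr 1
      simp [Complex.normSq_apply]
      ring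
    rw [habs, neg_div, Real.arcsin_neg, key]
    ring
  have harg4 : Complex.arg (-(a:ℂ) - Complex.I) = Real.arctan a⁻¹ - Real.pi := by
    rw [Complex.arg_of_re_neg_of_im_neg (by simp [ha]) (by simp)]
    have h5 : (-(-(a:ℂ) - Complex.I)).im = 1 := by simp
    rw [h5]
    have habs : ‖(-(a:ℂ) - Complex.I)‖ = Real.sqrt (a^2+1) := by
      rw [Complex.norm_def]
      congr 1
      simp [Complex.normSq_apply]
      ring
    rw [habs, key]
  rw [ctr, h1, h2, log_sub_log_pair habs1, log_sub_log_pair habs3]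
  rw [harg1, harg2, harg3, harg4, Real.arctan_inv_of_pos ha]
  push_cast
  ring

lemma ctr_partialSum (p : FormalMultilinearSeries ℂ ℂ ℂ) (n : ℕ) :
    ctr (fun z => p.partialSum n z) = 0 := by
  apply ctr_eq_zero_of_primitive (s := Set.univ)
    (F := fun z => ∑ k ∈ Finset.range n, (p.coeff k / ((k:ℂ)+1)) * z^(k+1))
  · intros; trivial
  · intros; trivial
  · intro z _
    have h : HasDerivAt (fun z : ℂ => ∑ k ∈ Finset.range n, (p.coeff k / ((k:ℂ)+1)) * z^(k+1))
        (∑ k ∈ Finset.range n, p.coeff k * z^k) z := by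
      apply HasDerivAt.fun_sum
      intro k _
      have h := (hasDerivAt_pow (k+1) z).const_mul (p.coeff k / ((k:ℂ)+1))
      refine h.congr_deriv (Eq.symm ?_)
      have hk : ((k:ℂ)+1) ≠ 0 := Nat.cast_add_one_ne_zero k
      push_cast
      field_simp
    convert h using 1
    simp only [FormalMultilinearSeries.partialSum,
      FormalMultilinearSeries.apply_eq_pow_smul_coeff, smul_eq_mul]
    exact Finset.sum_congr rfl (fun k _ => mul_comm _ _)
  · exact (p.partialSum_continuous n).continuousOn

lemma ctr_entire {E : ℂ → ℂ} (hE : Differentiable ℂ E) : ctr E = 0 := by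
  set p := cauchyPowerSeries E 0 2 with hp
  have hball : HasFPowerSeriesOnBall E p 0 ((2:ℝ≥0) : ℝ≥0∞) :=
    (hE.differentiableOn (s := Metric.closedBall (0:ℂ) (2:ℝ≥0))).hasFPowerSeriesOnBall (by norm_num)
  have hu : TendstoUniformlyOn (fun n y => p.partialSum n y) (fun y => E (0 + y)) Filter.atTop
      (Metric.ball (0:ℂ) ((3/2 : ℝ≥0) : ℝ)) :=
    hball.tendstoUniformlyOn (ENNReal.coe_lt_coe.mpr (by rw [← NNReal.coe_lt_coe]; norm_num))
  simp only [zero_add] at hu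
  obtain ⟨C, hC⟩ := (isCompact_closedBall (0:ℂ) ((3/2 : ℝ≥0) : ℝ)).exists_bound_of_continuousOn
    hE.continuous.continuousOn
  rw [Metric.tendstoUniformlyOn_iff] at hu
  have hev : ∀ᶠ n in Filter.atTop, ∀ y ∈ Metric.ball (0:ℂ) ((3/2 : ℝ≥0) : ℝ),
      dist (E y) (p.partialSum n y) < 1 := hu 1 one_pos
  have hu' : TendstoUniformlyOn (fun n y => p.partialSum n y) E Filter.atTop
      (Metric.ball (0:ℂ) ((3/2 : ℝ≥0) : ℝ)) := Metric.tendstoUniformlyOn_iff.mpr hu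
  have hnorm : ∀ n, (∀ y ∈ Metric.ball (0:ℂ) ((3/2 : ℝ≥0) : ℝ),
      dist (E y) (p.partialSum n y) < 1) →
      ∀ y ∈ Metric.ball (0:ℂ) ((3/2 : ℝ≥0) : ℝ), ‖p.partialSum n y‖ ≤ C + 1 := by
    intro n hn y hy
    have h8 := hn y hy
    rw [dist_eq_norm] at h8
    have h9 := norm_sub_norm_le (p.partialSum n y) (E y)
    rw [norm_sub_rev] at h9
    have h10 := hC y (Metric.ball_subset_closedBall hy)
    linarith
  have hmemseg : ∀ t : ℝ, t ∈ Set.uIoc (-1:ℝ) 1 → ((t:ℂ) ∈ Metric.ball (0:ℂ) ((3/2 : ℝ≥0) : ℝ)) := by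
    intro t ht
    rw [Set.uIoc_of_le (by norm_num : (-1:ℝ) ≤ 1)] at ht
    rw [mem_ball_zero_iff]
    have : ‖(t:ℂ)‖ = |t| := Complex.norm_real t
    rw [this]
    have : |t| ≤ 1 := abs_le.mpr ⟨ht.1.le, ht.2⟩
    push_cast
    linarith
  have hmemarc : ∀ θ : ℝ, Complex.exp (Complex.I * θ) ∈ Metric.ball (0:ℂ) ((3/2 : ℝ≥0) : ℝ) := by
    intro θ
    rw [mem_ball_zero_iff, abs_cexpIθ]
    push_cast
    norm_num
  have hseg : Filter.Tendsto (fun n => ∫ u in (-1:ℝ)..1, p.partialSum n u) Filter.atTop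
      (nhds (∫ u in (-1:ℝ)..1, E u)) := by
    apply intervalIntegral.tendsto_integral_filter_of_dominated_convergence (bound := fun _ => C + 1)
    · exact Filter.Eventually.of_forall (fun n =>
        (((p.partialSum_continuous n).comp Complex.continuous_ofReal).aestronglyMeasurable).restrict)
    · filter_upwards [hev] with n hn
      apply MeasureTheory.ae_of_all
      intro t ht
      exact hnorm n hn _ (hmemseg t ht)
    · exact intervalIntegrable_const
    · apply MeasureTheory.ae_of_all
      intro t ht
      exact hu'.tendsto_at (hmemseg t ht)
  have harc : Filter.Tendsto (fun n => ∫ θ in (0:ℝ)..Real.pi,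
      p.partialSum n (Complex.exp (Complex.I * θ)) * (Complex.I * Complex.exp (Complex.I * θ)))
      Filter.atTop
      (nhds (∫ θ in (0:ℝ)..Real.pi, E (Complex.exp (Complex.I * θ)) * (Complex.I * Complex.exp (Complex.I * θ)))) := by
    apply intervalIntegral.tendsto_integral_filter_of_dominated_convergence (bound := fun _ => C + 1)
    · refine Filter.Eventually.of_forall (fun n => ?_)
      exact ((((p.partialSum_continuous n).comp continuous_cexpIθ).mul
        (continuous_const.mul continuous_cexpIθ)).aestronglyMeasurable).restrict
    · filter_upwards [hev] with n hn
      apply MeasureTheory.ae_of_all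
      intro θ _
      have h11 := hnorm n hn _ (hmemarc θ)
      calc ‖p.partialSum n (Complex.exp (Complex.I * θ)) * (Complex.I * Complex.exp (Complex.I * θ))‖
          = ‖p.partialSum n (Complex.exp (Complex.I * θ))‖ := by
            rw [norm_mul, norm_mul,
              abs_cexpIθ, Complex.norm_I]
            ring
        _ ≤ C + 1 := h11
    · exact intervalIntegrable_const
    · apply MeasureTheory.ae_of_all
      intro θ _
      exact (hu'.tendsto_at (hmemarc θ)).mul tendsto_const_nhds
  have hctr : Filter.Tendsto (fun n => ctr (fun z => p.partialSum n z)) Filter.atTop (nhds (ctr E)) :=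
    hseg.add harc
  have h0 : (fun n : ℕ => ctr (fun z => p.partialSum n z)) = fun _ => (0:ℂ) :=
    funext (fun n => ctr_partialSum p n)
  rw [h0] at hctr
  exact tendsto_nhds_unique hctr tendsto_const_nhds

noncomputable def ghat (lam : ℝ) (z : ℂ) : ℂ :=
  ∫ θ in (0:ℝ)..Real.pi,
    Complex.exp ((lam : ℂ) * ((Real.cos θ : ℂ) + Complex.I * (Real.sin θ : ℂ))) *
      Complex.exp (Complex.I * θ) / (z ^ 2 + Complex.exp (2 * Complex.I * θ))

lemma numer_cont (lam : ℝ) : Continuous (fun θ : ℝ =>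
    Complex.exp ((lam : ℂ) * ((Real.cos θ : ℂ) + Complex.I * (Real.sin θ : ℂ))) *
      Complex.exp (Complex.I * θ)) := by fun_prop

lemma numer_bound (lam : ℝ) (θ : ℝ) :
    ‖Complex.exp ((lam : ℂ) * ((Real.cos θ : ℂ) + Complex.I * (Real.sin θ : ℂ))) *
      Complex.exp (Complex.I * θ)‖ ≤ Real.exp |lam| := by
  rw [norm_mul, abs_cexpIθ, mul_one, Complex.norm_exp]
  apply Real.exp_le_exp.mpr
  have h1 : ((lam : ℂ) * ((Real.cos θ : ℂ) + Complex.I * (Real.sin θ : ℂ))).re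
      = lam * Real.cos θ := by simp [Complex.cos_ofReal_re, Complex.sin_ofReal_re]
  rw [h1]
  calc lam * Real.cos θ ≤ |lam * Real.cos θ| := le_abs_self _
    _ = |lam| * |Real.cos θ| := abs_mul _ _
    _ ≤ |lam| * 1 := by
        apply mul_le_mul_of_nonneg_left (Real.abs_cos_le_one θ) (abs_nonneg lam)
    _ = |lam| := mul_one _

lemma abs_cexp2Iθ (θ : ℝ) : ‖Complex.exp (2 * Complex.I * θ)‖ = 1 := by
  rw [Complex.norm_exp]
  simp

lemma den_lb {r : ℝ} (x : ℂ) (hx : ‖x‖ ≤ r) (θ : ℝ) :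
    1 - r^2 ≤ ‖x ^ 2 + Complex.exp (2 * Complex.I * θ)‖ := by
  have h1 := abs_cexp2Iθ θ
  have h3 := norm_sub_le (x ^ 2 + Complex.exp (2 * Complex.I * θ)) (x ^ 2)
  have h5 : x ^ 2 + Complex.exp (2 * Complex.I * θ) - x ^ 2 = Complex.exp (2 * Complex.I * θ) := by
    ring
  rw [h5, h1] at h3
  have h4 : ‖x ^ 2‖ ≤ r ^ 2 := by
    rw [norm_pow]
    have h0 : (0:ℝ) ≤ ‖x‖ := norm_nonneg x
    nlinarith
  linarith

lemma ghat_differentiableOn (lam : ℝ) :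
    DifferentiableOn ℂ (ghat lam) (Metric.ball (0:ℂ) 1) := by
  intro z₀ hz₀
  apply DifferentiableAt.differentiableWithinAt
  rw [mem_ball_zero_iff] at hz₀
  set ε : ℝ := (1 - ‖z₀‖)/2 with hε_def
  have hε : 0 < ε := by
    have := norm_nonneg z₀
    simp only [hε_def]
    linarith
  set r : ℝ := ‖z₀‖ + ε with hr_def
  have hr1 : r < 1 := by simp only [hr_def, hε_def]; linarith
  have hr0 : 0 < r := by positivity
  have hδ : 0 < 1 - r^2 := by nlinarith
  have hxr : ∀ x ∈ Metric.ball z₀ ε, ‖x‖ ≤ r := by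
    intro x hx
    rw [Metric.mem_ball, dist_eq_norm] at hx
    calc ‖x‖ = ‖z₀ + (x - z₀)‖ := by ring_nf
      _ ≤ ‖z₀‖ + ‖x - z₀‖ := norm_add_le _ _
      _ ≤ r := by simp only [hr_def]; linarith
  have hdenne : ∀ x ∈ Metric.ball z₀ ε, ∀ θ : ℝ,
      x ^ 2 + Complex.exp (2 * Complex.I * θ) ≠ 0 := by
    intro x hx θ h
    have := den_lb x (hxr x hx) θ
    rw [h] at this
    simp only [norm_zero] at this
    nlinarith
  have hz₀mem : z₀ ∈ Metric.ball z₀ ε := Metric.mem_ball_self hε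
  have key := intervalIntegral.hasDerivAt_integral_of_dominated_loc_of_deriv_le
    (𝕜 := ℂ) (μ := MeasureTheory.volume) (a := (0:ℝ)) (b := Real.pi)
    (F := fun x θ =>
      Complex.exp ((lam : ℂ) * ((Real.cos θ : ℂ) + Complex.I * (Real.sin θ : ℂ))) *
        Complex.exp (Complex.I * θ) / (x ^ 2 + Complex.exp (2 * Complex.I * θ)))
    (F' := fun x θ =>
      -(2*x) * (Complex.exp ((lam : ℂ) * ((Real.cos θ : ℂ) + Complex.I * (Real.sin θ : ℂ))) *
        Complex.exp (Complex.I * θ)) / (x ^ 2 + Complex.exp (2 * Complex.I * θ))^2)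
    (x₀ := z₀) (bound := fun _ => 2 * Real.exp |lam| / (1 - r^2)^2)
    (s := Metric.ball z₀ ε) (hs := Metric.ball_mem_nhds z₀ hε) ?_ ?_ ?_ ?_ ?_ ?_
  · exact key.2.differentiableAt
  · filter_upwards [Metric.ball_mem_nhds z₀ hε] with x hx
    apply Continuous.aestronglyMeasurable
    exact (numer_cont lam).div
      ((continuous_const.pow 2).add (by fun_prop)) (hdenne x hx)
  · apply Continuous.intervalIntegrable
    exact (numer_cont lam).div
      ((continuous_const.pow 2).add (by fun_prop)) (hdenne z₀ hz₀mem)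
  · apply Continuous.aestronglyMeasurable
    apply Continuous.div
    · exact continuous_const.mul (numer_cont lam)
    · exact (((continuous_const.pow 2).add (by fun_prop)).pow 2)
    · intro θ
      exact pow_ne_zero 2 (hdenne z₀ hz₀mem θ)
  · apply MeasureTheory.ae_of_all
    intro θ _ x hx
    rw [norm_div, norm_mul, norm_neg, norm_mul]
    have hb1 := numer_bound lam θ
    have hb2 := den_lb x (hxr x hx) θ
    have hb3 : ‖(x ^ 2 + Complex.exp (2 * Complex.I * θ))^2‖ = ‖x ^ 2 + Complex.exp (2 * Complex.I * θ)‖^2 := norm_pow _ _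
    rw [hb3]
    have hx1 : ‖x‖ ≤ 1 := le_trans (hxr x hx) hr1.le
    have h2 : ‖(2:ℂ)‖ = 2 := by norm_num
    rw [h2]
    have hnn : (0:ℝ) ≤ ‖Complex.exp ((lam : ℂ) * ((Real.cos θ : ℂ) + Complex.I * (Real.sin θ : ℂ))) *
        Complex.exp (Complex.I * θ)‖ := norm_nonneg _
    have hd2 : (1 - r^2)^2 ≤ ‖x ^ 2 + Complex.exp (2 * Complex.I * θ)‖^2 := by nlinarith
    exact div_le_div₀ (by positivity) (by nlinarith) (by positivity) hd2
  · exact intervalIntegrable_const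
  · apply MeasureTheory.ae_of_all
    intro θ _ x hx
    have hd : HasDerivAt (fun y : ℂ => y ^ 2 + Complex.exp (2 * Complex.I * θ))
        (2 * x) x := by
      simpa using (hasDerivAt_pow 2 x).add_const (Complex.exp (2 * Complex.I * θ))
    have hc : HasDerivAt (fun _ : ℂ =>
        Complex.exp ((lam : ℂ) * ((Real.cos θ : ℂ) + Complex.I * (Real.sin θ : ℂ))) *
          Complex.exp (Complex.I * θ)) 0 x := hasDerivAt_const _ _
    have := hc.div hd (hdenne x hx θ)
    refine this.congr_deriv (Eq.symm ?_)
    field_simp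
    ring

/-- residue computation extracting the singularity of Yarmukhamedov's
fundamental solution: for `λ ≥ 0` and `0 < a < 1`,
`(1/2)∫_{−1}^{1} e^{λu}/(a²+u²) du
   = (π/2) e^{iλa}/a − (i/2)∫₀^π e^{λ(cosθ+isinθ)} e^{iθ}/(a²+e^{2iθ}) dθ`;
in particular `∫₀¹ (e^{λu}+e^{−λu})/(2(a²+u²)) du − (π/2) e^{iλa}/a` extends to a smooth
function of `a` on a neighborhood of `[0,1)`. -/
theorem stmt_7 (lam : ℝ) (hlam : 0 ≤ lam) :
    (∀ a : ℝ, 0 < a → a < 1 →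
      (1 / 2 : ℂ) * ∫ u in (-1 : ℝ)..1, ((Real.exp (lam * u) / (a ^ 2 + u ^ 2) : ℝ) : ℂ)
        = ((Real.pi / 2 : ℝ) : ℂ) * Complex.exp (Complex.I * lam * a) / (a : ℂ)
          - Complex.I / 2 * ∫ θ in (0 : ℝ)..Real.pi,
              Complex.exp ((lam : ℂ) * ((Real.cos θ : ℂ) + Complex.I * (Real.sin θ : ℂ))) *
                Complex.exp (Complex.I * θ) /
                ((a : ℂ) ^ 2 + Complex.exp (2 * Complex.I * θ))) ∧
    ∃ U : Set ℝ, IsOpen U ∧ Set.Ico (0 : ℝ) 1 ⊆ U ∧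
      ∃ g : ℝ → ℂ, ContDiffOn ℝ (⊤ : ℕ∞) g U ∧
        ∀ a : ℝ, 0 < a → a < 1 →
          (∫ u in (0 : ℝ)..1,
              (((Real.exp (lam * u) + Real.exp (-(lam * u))) / (2 * (a ^ 2 + u ^ 2)) : ℝ) : ℂ))
            - ((Real.pi / 2 : ℝ) : ℂ) * Complex.exp (Complex.I * lam * a) / (a : ℂ) = g a := by
  have part1 : ∀ a : ℝ, 0 < a → a < 1 →
      (1 / 2 : ℂ) * ∫ u in (-1 : ℝ)..1, ((Real.exp (lam * u) / (a ^ 2 + u ^ 2) : ℝ) : ℂ)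
        = ((Real.pi / 2 : ℝ) : ℂ) * Complex.exp (Complex.I * lam * a) / (a : ℂ)
          - Complex.I / 2 * ∫ θ in (0 : ℝ)..Real.pi,
              Complex.exp ((lam : ℂ) * ((Real.cos θ : ℂ) + Complex.I * (Real.sin θ : ℂ))) *
                Complex.exp (Complex.I * θ) /
                ((a : ℂ) ^ 2 + Complex.exp (2 * Complex.I * θ)) := by
    intro a ha ha1
    have haC : (a : ℂ) ≠ 0 := by exact_mod_cast ha.ne'
    obtain ⟨w, hw_def⟩ : ∃ w : ℂ, w = Complex.I * (a : ℂ) := ⟨_, rfl⟩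
    have hw0 : w ≠ 0 := by rw [hw_def]; exact mul_ne_zero Complex.I_ne_zero haC
    have hww : -w ≠ w := by
      intro h
      apply hw0
      have h2 : (2:ℂ) * w = 0 := by linear_combination -h
      simpa using h2
    obtain ⟨C₁, hC₁_def⟩ : ∃ x : ℂ, x = Complex.exp (Complex.I * lam * a) := ⟨_, rfl⟩
    obtain ⟨C₂, hC₂_def⟩ : ∃ x : ℂ, x = Complex.exp (-(Complex.I * lam * a)) := ⟨_, rfl⟩
    obtain ⟨N, hN_def⟩ : ∃ N : ℂ → ℂ,
        N = fun z => Complex.exp ((lam:ℂ) * z) - (C₁ + C₂)/2 - ((C₁ - C₂)/(2*w)) * z :=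
      ⟨_, rfl⟩
    have hNw : N w = 0 := by
      simp only [hN_def]
      rw [show (lam:ℂ) * w = Complex.I * lam * a by rw [hw_def]; ring, ← hC₁_def]
      field_simp
      ring
    have hNw' : N (-w) = 0 := by
      simp only [hN_def]
      rw [show (lam:ℂ) * (-w) = -(Complex.I * lam * a) by rw [hw_def]; ring, ← hC₂_def]
      field_simp
      ring
    have hNdiff : Differentiable ℂ N := by
      rw [hN_def]
      have h1 : Differentiable ℂ (fun z : ℂ => Complex.exp ((lam:ℂ) * z)) :=
        Complex.differentiable_exp.comp (differentiable_id.const_mul (lam:ℂ))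
      exact (h1.sub_const _).sub (differentiable_id.const_mul _)
    obtain ⟨g1, hg1_def⟩ : ∃ g : ℂ → ℂ, g = dslope N w := ⟨_, rfl⟩
    obtain ⟨E, hE_def⟩ : ∃ e : ℂ → ℂ, e = dslope g1 (-w) := ⟨_, rfl⟩
    have hg1_at : ∀ z, z ≠ w → g1 z = (z - w)⁻¹ * N z := by
      intro z hz
      rw [hg1_def, dslope_of_ne _ hz, slope_def_field, hNw, sub_zero, div_eq_inv_mul]
    have hg1w' : g1 (-w) = 0 := by
      rw [hg1_at _ hww, hNw', mul_zero]
    have hEval : ∀ z, z ≠ w → z ≠ -w → E z = N z / ((z - w) * (z + w)) := by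
      intro z hz1 hz2
      have hz1' : z - w ≠ 0 := sub_ne_zero.mpr hz1
      have hz2' : z + w ≠ 0 := fun h => hz2 (by linear_combination h)
      rw [hE_def, dslope_of_ne _ hz2, slope_def_field, hg1w', sub_zero, hg1_at z hz1,
        sub_neg_eq_add]
      field_simp
    have hNan : ∀ z, AnalyticAt ℂ N z := fun z => hNdiff.analyticAt z
    have hg1diff : Differentiable ℂ g1 := by
      intro z
      rcases eq_or_ne z w with h | hz
      · obtain ⟨p', hp'⟩ := hNan w
        rw [hg1_def, h]
        exact hp'.has_fpower_series_dslope_fslope.analyticAt.differentiableAt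
      · rw [hg1_def]
        exact (differentiableAt_dslope_of_ne hz).mpr (hNdiff z)
    have hg1an_neg : AnalyticAt ℂ g1 (-w) := by
      have hexpl : AnalyticAt ℂ (fun z => (z - w)⁻¹ * (N z - N w)) (-w) := by
        apply AnalyticAt.mul
        · apply AnalyticAt.inv
          · exact analyticAt_id.sub analyticAt_const
          · simpa [sub_ne_zero] using hww
        · exact (hNan _).sub analyticAt_const
      apply hexpl.congr
      filter_upwards [dslope_eventuallyEq_slope_of_ne N hww] with z hz
      rw [hg1_def, hz, slope_def_field, div_eq_inv_mul]
    have hEdiff : Differentiable ℂ E := by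
      intro z
      rcases eq_or_ne z (-w) with h | hz
      · obtain ⟨p', hp'⟩ := hg1an_neg
        rw [hE_def, h]
        exact hp'.has_fpower_series_dslope_fslope.analyticAt.differentiableAt
      · rw [hE_def]
        exact (differentiableAt_dslope_of_ne hz).mpr (hg1diff z)
    obtain ⟨c, hc_def⟩ : ∃ x : ℂ, x = C₁ / (2 * w) := ⟨_, rfl⟩
    obtain ⟨d, hd_def⟩ : ∃ x : ℂ, x = -C₂ / (2 * w) := ⟨_, rfl⟩
    have hw2 : w^2 = -((a:ℂ)^2) := by
      rw [hw_def]
      linear_combination (a:ℂ)^2 * Complex.I_sq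
    have hsq : ∀ z : ℂ, (a:ℂ)^2 + z^2 = (z - w) * (z + w) := by
      intro z
      linear_combination hw2
    have hdecomp : ∀ z : ℂ, z ≠ w → z ≠ -w →
        Complex.exp ((lam:ℂ) * z) / ((a:ℂ)^2 + z^2) = E z + c * (z - w)⁻¹ + d * (z + w)⁻¹ := by
      intro z hz1 hz2
      have hz1' : z - w ≠ 0 := sub_ne_zero.mpr hz1
      have hz2' : z + w ≠ 0 := fun h => hz2 (by linear_combination h)
      have hD : (z - w) * (z + w) ≠ 0 := mul_ne_zero hz1' hz2'
      have e1 : c * (z - w)⁻¹ = c * (z + w) / ((z - w) * (z + w)) := by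
        rw [eq_div_iff hD]
        field_simp
      have e2 : d * (z + w)⁻¹ = d * (z - w) / ((z - w) * (z + w)) := by
        rw [eq_div_iff hD]
        field_simp
      rw [hEval z hz1 hz2, hsq z, e1, e2, add_assoc, ← add_div, ← add_div]
      congr 1
      simp only [hN_def, hc_def, hd_def]
      field_simp
      ring
    have hsegne : ∀ u : ℝ, (u:ℂ) ≠ w ∧ (u:ℂ) ≠ -w := by
      intro u
      constructor
      · intro h
        rw [hw_def] at h
        have h2 := congrArg Complex.im h
        simp at h2
        linarith
      · intro h
        rw [hw_def] at h
        have h2 := congrArg Complex.im h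
        simp at h2
        linarith
    have habsw : ‖w‖ = a := by
      rw [hw_def, norm_mul, Complex.norm_I, Complex.norm_real, Real.norm_eq_abs, one_mul, abs_of_pos ha]
    have harcne : ∀ θ : ℝ, Complex.exp (Complex.I * θ) ≠ w ∧ Complex.exp (Complex.I * θ) ≠ -w := by
      intro θ
      constructor
      · intro h
        have h2 := congrArg norm h
        rw [abs_cexpIθ, habsw] at h2
        linarith
      · intro h
        have h2 := congrArg norm h
        rw [abs_cexpIθ, norm_neg, habsw] at h2
        linarith
    -- Integrability facts
    have hcontE : Continuous E := hEdiff.continuous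
    have hinv1segc : Continuous (fun u : ℝ => ((u:ℂ) - w)⁻¹) :=
      (Complex.continuous_ofReal.sub continuous_const).inv₀
        (fun u => sub_ne_zero.mpr (hsegne u).1)
    have hinv2segc : Continuous (fun u : ℝ => ((u:ℂ) + w)⁻¹) :=
      (Complex.continuous_ofReal.add continuous_const).inv₀
        (fun u => fun h => (hsegne u).2 (eq_neg_of_add_eq_zero_left h))
    have hinv1arcc : Continuous (fun θ : ℝ => (Complex.exp (Complex.I * θ) - w)⁻¹) :=
      (continuous_cexpIθ.sub continuous_const).inv₀
        (fun θ => sub_ne_zero.mpr (harcne θ).1)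
    have hinv2arcc : Continuous (fun θ : ℝ => (Complex.exp (Complex.I * θ) + w)⁻¹) :=
      (continuous_cexpIθ.add continuous_const).inv₀
        (fun θ => fun h => (harcne θ).2 (eq_neg_of_add_eq_zero_left h))
    have iE : IntervalIntegrable (fun u : ℝ => E (u:ℂ)) MeasureTheory.volume (-1) 1 :=
      (hcontE.comp Complex.continuous_ofReal).intervalIntegrable _ _
    have i1 : IntervalIntegrable (fun u : ℝ => c * ((u:ℂ) - w)⁻¹) MeasureTheory.volume (-1) 1 :=
      (continuous_const.mul hinv1segc).intervalIntegrable _ _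
    have i2 : IntervalIntegrable (fun u : ℝ => d * ((u:ℂ) + w)⁻¹) MeasureTheory.volume (-1) 1 :=
      (continuous_const.mul hinv2segc).intervalIntegrable _ _
    have iEarc : IntervalIntegrable (fun θ : ℝ => E (Complex.exp (Complex.I * θ))
        * (Complex.I * Complex.exp (Complex.I * θ))) MeasureTheory.volume 0 Real.pi :=
      ((hcontE.comp continuous_cexpIθ).mul
        (continuous_const.mul continuous_cexpIθ)).intervalIntegrable _ _
    have i1arc : IntervalIntegrable (fun θ : ℝ => c * ((Complex.exp (Complex.I * θ) - w)⁻¹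
        * (Complex.I * Complex.exp (Complex.I * θ)))) MeasureTheory.volume 0 Real.pi :=
      (continuous_const.mul (hinv1arcc.mul
        (continuous_const.mul continuous_cexpIθ))).intervalIntegrable _ _
    have i2arc : IntervalIntegrable (fun θ : ℝ => d * ((Complex.exp (Complex.I * θ) + w)⁻¹
        * (Complex.I * Complex.exp (Complex.I * θ)))) MeasureTheory.volume 0 Real.pi :=
      (continuous_const.mul (hinv2arcc.mul
        (continuous_const.mul continuous_cexpIθ))).intervalIntegrable _ _
    have h_seg : (∫ u in (-1:ℝ)..1, Complex.exp ((lam:ℂ) * (u:ℂ)) / ((a:ℂ)^2 + (u:ℂ)^2))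
        = (∫ u in (-1:ℝ)..1, E (u:ℂ)) + c * (∫ u in (-1:ℝ)..1, ((u:ℂ) - w)⁻¹)
          + d * (∫ u in (-1:ℝ)..1, ((u:ℂ) + w)⁻¹) := by
      rw [← intervalIntegral.integral_const_mul, ← intervalIntegral.integral_const_mul,
        ← intervalIntegral.integral_add iE i1, ← intervalIntegral.integral_add (iE.add i1) i2]
      apply intervalIntegral.integral_congr
      intro u _
      dsimp only
      exact hdecomp (u:ℂ) (hsegne u).1 (hsegne u).2
    have h_arc : (∫ θ in (0:ℝ)..Real.pi,
        Complex.exp ((lam:ℂ) * Complex.exp (Complex.I * θ))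
          / ((a:ℂ)^2 + (Complex.exp (Complex.I * θ))^2)
          * (Complex.I * Complex.exp (Complex.I * θ)))
        = (∫ θ in (0:ℝ)..Real.pi, E (Complex.exp (Complex.I * θ))
            * (Complex.I * Complex.exp (Complex.I * θ)))
          + c * (∫ θ in (0:ℝ)..Real.pi, (Complex.exp (Complex.I * θ) - w)⁻¹
            * (Complex.I * Complex.exp (Complex.I * θ)))
          + d * (∫ θ in (0:ℝ)..Real.pi, (Complex.exp (Complex.I * θ) + w)⁻¹
            * (Complex.I * Complex.exp (Complex.I * θ))) := by
      rw [← intervalIntegral.integral_const_mul, ← intervalIntegral.integral_const_mul,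
        ← intervalIntegral.integral_add iEarc i1arc,
        ← intervalIntegral.integral_add (iEarc.add i1arc) i2arc]
      apply intervalIntegral.integral_congr
      intro θ _
      dsimp only
      have h5 := hdecomp (Complex.exp (Complex.I * θ)) (harcne θ).1 (harcne θ).2
      rw [h5]
      ring
    have hE0 : ctr E = 0 := ctr_entire hEdiff
    have h1 := ctr_sub_inv ha ha1
    have h2 := ctr_add_inv ha
    rw [← hw_def] at h1 h2
    simp only [ctr] at hE0 h1 h2
    have hc2 : c * (2*(Real.pi:ℂ)*Complex.I) = (Real.pi:ℂ) * C₁ / (a:ℂ) := by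
      rw [hc_def, hw_def]
      field_simp
    have hcf : (∫ u in (-1:ℝ)..1, Complex.exp ((lam:ℂ) * (u:ℂ)) / ((a:ℂ)^2 + (u:ℂ)^2))
        + (∫ θ in (0:ℝ)..Real.pi,
          Complex.exp ((lam:ℂ) * Complex.exp (Complex.I * θ))
            / ((a:ℂ)^2 + (Complex.exp (Complex.I * θ))^2)
            * (Complex.I * Complex.exp (Complex.I * θ)))
        = (Real.pi:ℂ) * C₁ / (a:ℂ) := by
      rw [h_seg, h_arc]
      linear_combination hE0 + c * h1 + d * h2 + hc2
    have hcoe : (∫ u in (-1:ℝ)..1, ((Real.exp (lam*u) / (a^2+u^2) : ℝ):ℂ))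
        = ∫ u in (-1:ℝ)..1, Complex.exp ((lam:ℂ) * (u:ℂ)) / ((a:ℂ)^2 + (u:ℂ)^2) := by
      apply intervalIntegral.integral_congr
      intro u _
      dsimp only
      push_cast
      norm_num
    have harc_stmt : (∫ θ in (0:ℝ)..Real.pi,
        Complex.exp ((lam:ℂ) * Complex.exp (Complex.I * θ))
          / ((a:ℂ)^2 + (Complex.exp (Complex.I * θ))^2)
          * (Complex.I * Complex.exp (Complex.I * θ)))
        = Complex.I * ∫ θ in (0:ℝ)..Real.pi,
            Complex.exp ((lam : ℂ) * ((Real.cos θ : ℂ) + Complex.I * (Real.sin θ : ℂ))) *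
              Complex.exp (Complex.I * θ) /
              ((a : ℂ) ^ 2 + Complex.exp (2 * Complex.I * θ)) := by
      rw [← intervalIntegral.integral_const_mul]
      apply intervalIntegral.integral_congr
      intro θ _
      dsimp only
      have he : ((Real.cos θ : ℝ):ℂ) + Complex.I * ((Real.sin θ : ℝ):ℂ)
          = Complex.exp (Complex.I * θ) := by
        rw [mul_comm Complex.I ((θ:ℝ):ℂ), Complex.exp_mul_I, ← Complex.ofReal_cos,
          ← Complex.ofReal_sin]
        ring
      have he2 : Complex.exp (2 * Complex.I * θ) = (Complex.exp (Complex.I * θ))^2 := by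
        rw [show (2:ℂ) * Complex.I * (θ:ℂ) = Complex.I * θ + Complex.I * θ by ring,
          Complex.exp_add]
        ring
      rw [he, he2]
      ring
    rw [hcoe]
    rw [harc_stmt] at hcf
    have hfin : (∫ u in (-1:ℝ)..1, Complex.exp ((lam:ℂ) * (u:ℂ)) / ((a:ℂ)^2 + (u:ℂ)^2))
        = (Real.pi:ℂ) * C₁ / (a:ℂ) - Complex.I * ∫ θ in (0:ℝ)..Real.pi,
            Complex.exp ((lam : ℂ) * ((Real.cos θ : ℂ) + Complex.I * (Real.sin θ : ℂ))) *
              Complex.exp (Complex.I * θ) /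
              ((a : ℂ) ^ 2 + Complex.exp (2 * Complex.I * θ)) := by
      linear_combination hcf
    rw [hfin, hC₁_def]
    push_cast
    ring
  refine ⟨part1, Set.Ioo (-1:ℝ) 1, isOpen_Ioo, ?_,
    fun x : ℝ => -(Complex.I/2) * ghat lam (x:ℂ), ?_, ?_⟩
  · intro x hx
    exact ⟨by linarith [hx.1], hx.2⟩
  · have hd := ghat_differentiableOn lam
    have han := hd.analyticOnNhd Metric.isOpen_ball
    have hanR : AnalyticOnNhd ℝ (ghat lam) (Metric.ball 0 1) := han.restrictScalars
    have hof : AnalyticOnNhd ℝ (fun x : ℝ => (x:ℂ)) (Set.Ioo (-1:ℝ) 1) := by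
      intro x _
      exact Complex.ofRealCLM.analyticAt x
    have hmaps : Set.MapsTo (fun x : ℝ => (x:ℂ)) (Set.Ioo (-1:ℝ) 1) (Metric.ball (0:ℂ) 1) := by
      intro x hx
      rw [Metric.mem_ball, dist_zero_right, Complex.norm_real]
      exact abs_lt.mpr ⟨hx.1, hx.2⟩
    have hcomp := hanR.comp hof hmaps
    have hgan : AnalyticOnNhd ℝ (fun x : ℝ => -(Complex.I/2) * ghat lam (x:ℂ))
        (Set.Ioo (-1:ℝ) 1) := analyticOnNhd_const.mul hcomp
    exact hgan.contDiffOn (isOpen_Ioo.uniqueDiffOn)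
  · intro a ha ha1
    have hden : ∀ u : ℝ, a^2 + u^2 ≠ 0 := fun u => by positivity
    have hcont1 : Continuous (fun u : ℝ => Real.exp (lam*u)/(a^2+u^2)) := by
      apply Continuous.div (by fun_prop) (by fun_prop) hden
    have hcont2 : Continuous (fun u : ℝ => Real.exp (-(lam*u))/(a^2+u^2)) := by
      apply Continuous.div (by fun_prop) (by fun_prop) hden
    have hneg : (∫ u in (-1:ℝ)..0, Real.exp (lam*u)/(a^2+u^2))
        = ∫ u in (0:ℝ)..1, Real.exp (-(lam*u))/(a^2+u^2) := by
      have h := intervalIntegral.integral_comp_neg (a := (0:ℝ)) (b := 1)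
        (f := fun u => Real.exp (lam*u)/(a^2+u^2))
      rw [neg_zero] at h
      rw [← h]
      apply intervalIntegral.integral_congr
      intro u _
      dsimp only
      simp [neg_sq, mul_neg]
    have hsplit := intervalIntegral.integral_add_adjacent_intervals
      (μ := MeasureTheory.volume) (a := (-1:ℝ)) (b := 0) (c := 1)
      (hcont1.intervalIntegrable _ _) (hcont1.intervalIntegrable _ _)
    have hsym : (∫ u in (0:ℝ)..1, (Real.exp (lam*u) + Real.exp (-(lam*u)))/(2*(a^2+u^2)))
        = (1/2) * ∫ u in (-1:ℝ)..1, Real.exp (lam*u)/(a^2+u^2) := by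
      rw [← hsplit, hneg, ← intervalIntegral.integral_add
        (hcont2.intervalIntegrable _ _) (hcont1.intervalIntegrable _ _),
        ← intervalIntegral.integral_const_mul]
      apply intervalIntegral.integral_congr
      intro u _
      dsimp only
      have := hden u
      field_simp
      ring
    have hL : (∫ u in (0:ℝ)..1,
        (((Real.exp (lam*u) + Real.exp (-(lam*u)))/(2*(a^2+u^2)) : ℝ):ℂ))
        = (1/2:ℂ) * ∫ u in (-1:ℝ)..1, ((Real.exp (lam*u)/(a^2+u^2) : ℝ):ℂ) := by
      rw [intervalIntegral.integral_ofReal, intervalIntegral.integral_ofReal, hsym]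
      push_cast
      ring
    rw [hL, part1 a ha ha1]
    simp only [ghat]
    ring
end

section
/- Estimate (4.5). Let 0 < α < 1, η ∈ (π/2, π/(2α)), r > 0, θ ∈ (αη, π/2), and τ > 1. Let w ∈ ℂ satisfy |w| ≥ r^α and θ ≤ |arg w| ≤ π. Then for every point ζ' of the set S = {s^α e^{iαη} : s ≥ r} ∪ {s^α e^{−iαη} : s ≥ r} ∪ {r^α e^{iαφ} : |φ| ≤ η} (the image of the contour γ(η,r) under ζ ↦ ζ^α), one has |ζ' − τ w| ≥ C τ |w|, where C = min{1 − 1/τ, sin(θ − αη)}. -/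
private lemma cos_le_cos_aux {d x : ℝ} (hd0 : 0 ≤ d) (hdπ : d ≤ Real.pi)
    (h1 : d ≤ |x|) (h2 : |x| ≤ 2 * Real.pi - d) : Real.cos x ≤ Real.cos d := by
  rw [← Real.cos_abs x]
  rcases le_or_gt |x| Real.pi with h | h
  · exact Real.cos_le_cos_of_nonneg_of_le_pi hd0 h h1
  · have : Real.cos |x| = Real.cos (2 * Real.pi - |x|) := by
      rw [Real.cos_sub]; simp [Real.cos_two_pi, Real.sin_two_pi]
    rw [this]
    exact Real.cos_le_cos_of_nonneg_of_le_pi hd0 (by linarith) (by linarith)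

/-- estimate (4.5): let `0 < α < 1`, `η ∈ (π/2, π/(2α))`, `r > 0`,
`θ ∈ (αη, π/2)`, `τ > 1`, and let `w ∈ ℂ` satisfy `|w| ≥ r^α` and `θ ≤ |arg w| ≤ π`.
Then for every point `z` of the image `S` of the contour `γ(η,r)` under `ζ ↦ ζ^α`
(the two half lines `s^α e^{±iαη}`, `s ≥ r`, and the arc `r^α e^{iαφ}`, `|φ| ≤ η`),
one has `|z − τw| ≥ C τ |w|` with `C = min{1 − 1/τ, sin(θ − αη)}`. -/
theorem stmt_8 (α η r θ τ : ℝ) (hα0 : 0 < α) (hα1 : α < 1)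
    (hη1 : Real.pi / 2 < η) (hη2 : η < Real.pi / (2 * α)) (hr : 0 < r)
    (hθ1 : α * η < θ) (hθ2 : θ < Real.pi / 2) (hτ : 1 < τ)
    (w : ℂ) (hw1 : r ^ α ≤ ‖w‖)
    (hw2 : θ ≤ |Complex.arg w|) (hw3 : |Complex.arg w| ≤ Real.pi)
    (z : ℂ)
    (hz : (∃ s : ℝ, r ≤ s ∧ z = ((s ^ α : ℝ) : ℂ) * Complex.exp (Complex.I * (α * η)))
      ∨ (∃ s : ℝ, r ≤ s ∧ z = ((s ^ α : ℝ) : ℂ) * Complex.exp (-(Complex.I * (α * η))))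
      ∨ (∃ φ : ℝ, |φ| ≤ η ∧ z = ((r ^ α : ℝ) : ℂ) * Complex.exp (Complex.I * (α * φ)))) :
    min (1 - 1 / τ) (Real.sin (θ - α * η)) * (τ * ‖w‖)
      ≤ ‖z - (τ : ℂ) * w‖ := by
  have hπ := Real.pi_pos
  have hαη : 0 < α * η := mul_pos hα0 (by linarith)
  -- extract polar form of z
  obtain ⟨ρ, ψ, hρ, hψ, hzeq⟩ :
      ∃ ρ ψ : ℝ, 0 ≤ ρ ∧ |ψ| ≤ α * η ∧ z = (ρ : ℂ) * Complex.exp (Complex.I * ψ) := by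
    rcases hz with ⟨s, hs, h⟩ | ⟨s, hs, h⟩ | ⟨φ, hφ, h⟩
    · exact ⟨s ^ α, α * η, Real.rpow_nonneg (by linarith) α,
        by rw [abs_of_pos hαη], by rw [h]; norm_cast⟩
    · refine ⟨s ^ α, -(α * η), Real.rpow_nonneg (by linarith) α,
        by rw [abs_neg, abs_of_pos hαη], ?_⟩
      rw [h]; congr 1; push_cast; ring_nf
    · refine ⟨r ^ α, α * φ, Real.rpow_nonneg hr.le α, ?_, by rw [h]; norm_cast⟩
      rw [abs_mul, abs_of_pos hα0]
      exact mul_le_mul_of_nonneg_left hφ hα0.le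
  set a := Complex.arg w with ha
  set d := θ - α * η with hdd
  have hd0 : 0 < d := sub_pos.mpr hθ1
  have hdπ : d < Real.pi / 2 := by simp only [hdd]; linarith
  have hsin : 0 < Real.sin d := Real.sin_pos_of_pos_of_lt_pi hd0 (by linarith)
  have hwpos : 0 < ‖w‖ := lt_of_lt_of_le (Real.rpow_pos_of_pos hr α) hw1
  set T := τ * ‖w‖ with hT
  have hT0 : 0 < T := mul_pos (by linarith) hwpos
  have hcos : Real.cos (ψ - a) ≤ Real.cos d := by
    apply cos_le_cos_aux hd0.le (by linarith)
    · have h1 : |a| - |ψ| ≤ |a - ψ| := abs_sub_abs_le_abs_sub a ψ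
      rw [abs_sub_comm] at h1
      simp only [hdd]; linarith [hw2, hψ]
    · have h2 : |ψ - a| ≤ |ψ| + |a| := abs_sub ψ a
      simp only [hdd]; linarith [hw3, hψ]
  -- components
  have hw' : w = (‖w‖ : ℂ) * Complex.exp (a * Complex.I) :=
    (Complex.norm_mul_exp_arg_mul_I w).symm
  have hre : (z - (τ : ℂ) * w).re = ρ * Real.cos ψ - T * Real.cos a := by
    rw [hzeq]
    conv_lhs => rw [hw']
    rw [mul_comm Complex.I (ψ : ℂ)]
    simp [Complex.exp_mul_I, Complex.mul_re, Complex.mul_im, hT,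
      Complex.cos_ofReal_re, Complex.sin_ofReal_re]
    ring
  have him : (z - (τ : ℂ) * w).im = ρ * Real.sin ψ - T * Real.sin a := by
    rw [hzeq]
    conv_lhs => rw [hw']
    rw [mul_comm Complex.I (ψ : ℂ)]
    simp [Complex.exp_mul_I, Complex.mul_re, Complex.mul_im, hT,
      Complex.cos_ofReal_re, Complex.sin_ofReal_re]
    ring
  have hsq : ‖z - (τ : ℂ) * w‖ ^ 2
      = (ρ * Real.cos ψ - T * Real.cos a) ^ 2 + (ρ * Real.sin ψ - T * Real.sin a) ^ 2 := by
    rw [Complex.sq_norm, Complex.normSq_apply, hre, him]; ring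
  have key : (T * Real.sin d) ^ 2 ≤ ‖z - (τ : ℂ) * w‖ ^ 2 := by
    rw [hsq]
    have e1 := Real.sin_sq_add_cos_sq ψ
    have e2 := Real.sin_sq_add_cos_sq a
    have e3 := Real.sin_sq_add_cos_sq d
    have e4 := Real.cos_sub ψ a
    have e5 : 0 ≤ ρ * T * (Real.cos d - Real.cos (ψ - a)) :=
      mul_nonneg (mul_nonneg hρ hT0.le) (sub_nonneg.mpr hcos)
    have e6 : (ρ * Real.cos ψ - T * Real.cos a) ^ 2 + (ρ * Real.sin ψ - T * Real.sin a) ^ 2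
        = ρ ^ 2 + T ^ 2 - 2 * (ρ * T) * Real.cos (ψ - a) := by
      rw [e4]; linear_combination (ρ ^ 2) * e1 + (T ^ 2) * e2
    rw [e6]
    have h1 : 2 * (ρ * T) * Real.cos (ψ - a) ≤ 2 * (ρ * T) * Real.cos d := by linarith
    have h2 : (T * Real.sin d) ^ 2 = T ^ 2 - (T * Real.cos d) ^ 2 := by
      linear_combination (T ^ 2) * e3
    have h3 : ρ ^ 2 + T ^ 2 - 2 * (ρ * T) * Real.cos d - (T ^ 2 - (T * Real.cos d) ^ 2)
        = (ρ - T * Real.cos d) ^ 2 := by ring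
    have h4 := sq_nonneg (ρ - T * Real.cos d)
    linarith
  have habs : T * Real.sin d ≤ ‖z - (τ : ℂ) * w‖ := by
    have := Real.sqrt_le_sqrt key
    rwa [Real.sqrt_sq (by positivity), Real.sqrt_sq (norm_nonneg _)] at this
  calc min (1 - 1 / τ) (Real.sin d) * T ≤ Real.sin d * T :=
        mul_le_mul_of_nonneg_right (min_le_right _ _) hT0.le
    _ = T * Real.sin d := mul_comm _ _
    _ ≤ _ := habs
end
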